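/- arXiv:2308.07022 — 2 statements merged into one kernel-verified Lean document; each statement's English description precedes it below -/
import Mathlib

section
/- Let σ ∈ ℝ with σ ≠ 0. If f₁, f₂ : [0,∞) → ℝ satisfy exp(−σt)·(f₁(s) + f₂(r)) = f₁(s+t) + f₂(r−t) for all real r, s, t with r ≥ 0 ≥ t ≥ −s, then there exist constants c₁, c₂, c₁', c₂' ∈ ℝ with c₁' + c₂' = 0 such that f₁(s) = c₁·exp(−σs) + c₁' for all s ≥ 0 and f₂(r) = c₂·exp(σr) + c₂' for all r ≥ 0. -/
/-!
Taking `t = -s` collapses the equation to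
`f₂ (r + s) = exp (σ s) * (f₁ s + f₂ r) - f₁ 0`, so `g r = f₂ r - f₂ 0` satisfies the
cocycle equation `g (r + s) = g s + exp (σ s) * g r`. Exchanging `r` and `s` in it gives
`g r * (exp (σ s) - 1) = g s * (exp (σ r) - 1)`, and `s = 1` (where `exp σ ≠ 1`) pins `g` down
to a multiple of `exp (σ r) - 1`. The case `r = 0` then expresses `f₁` through `f₂`.
-/

open Real

theorem exists_eq_mul_sub_one_of_cocycle {a g : ℝ → ℝ} (ha : a 1 ≠ 1)
    (hg : ∀ r s, 0 ≤ r → 0 ≤ s → g (r + s) = g s + a s * g r) :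
    ∃ c, ∀ r, 0 ≤ r → g r = c * (a r - 1) := by
  have ha' : a 1 - 1 ≠ 0 := sub_ne_zero.mpr ha
  refine ⟨g 1 / (a 1 - 1), fun r hr => ?_⟩
  have hr1 := hg r 1 hr zero_le_one
  have h1r := hg 1 r zero_le_one hr
  rw [add_comm 1 r] at h1r
  have hsymm : g r * (a 1 - 1) = g 1 * (a r - 1) := by linear_combination h1r - hr1
  field_simp
  linear_combination hsymm

section

variable {σ : ℝ} {f₁ f₂ : ℝ → ℝ}
  (heq : ∀ r s t : ℝ, 0 ≤ r → t ≤ 0 → -s ≤ t →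
    exp (-σ * t) * (f₁ s + f₂ r) = f₁ (s + t) + f₂ (r - t))
include heq

theorem add_eq_of_exp_twisted {r s : ℝ} (hr : 0 ≤ r) (hs : 0 ≤ s) :
    f₂ (r + s) = exp (σ * s) * (f₁ s + f₂ r) - f₁ 0 := by
  have h := heq r s (-s) hr (neg_nonpos.mpr hs) le_rfl
  rw [neg_mul_neg, add_neg_cancel, sub_neg_eq_add] at h
  linear_combination -h

theorem cocycle_of_exp_twisted {r s : ℝ} (hr : 0 ≤ r) (hs : 0 ≤ s) :
    f₂ (r + s) - f₂ 0 = (f₂ s - f₂ 0) + exp (σ * s) * (f₂ r - f₂ 0) := by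
  have hrs := add_eq_of_exp_twisted heq hr hs
  have h0s := add_eq_of_exp_twisted heq le_rfl hs
  rw [zero_add] at h0s
  linear_combination hrs - h0s

theorem eq_exp_mul_of_exp_twisted {s : ℝ} (hs : 0 ≤ s) :
    f₁ s = exp (-σ * s) * (f₂ s + f₁ 0) - f₂ 0 := by
  have h := add_eq_of_exp_twisted heq le_rfl hs
  rw [zero_add] at h
  have hinv : exp (-σ * s) * exp (σ * s) = 1 := by rw [← exp_add]; simp
  linear_combination -exp (-σ * s) * h - (f₁ s + f₂ 0) * hinv

end

theorem exp_twisted_two_functions (σ : ℝ) (hσ : σ ≠ 0) (f₁ f₂ : ℝ → ℝ)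
    (heq : ∀ r s t : ℝ, 0 ≤ r → t ≤ 0 → -s ≤ t →
      Real.exp (-σ * t) * (f₁ s + f₂ r) = f₁ (s + t) + f₂ (r - t)) :
    ∃ c₁ c₂ c₁' c₂' : ℝ, c₁' + c₂' = 0 ∧
      (∀ s : ℝ, 0 ≤ s → f₁ s = c₁ * Real.exp (-σ * s) + c₁') ∧
      (∀ r : ℝ, 0 ≤ r → f₂ r = c₂ * Real.exp (σ * r) + c₂') := by
  have hexp : exp (σ * 1) ≠ 1 := by simpa using hσ
  obtain ⟨c, hc⟩ := exists_eq_mul_sub_one_of_cocycle (a := fun r => exp (σ * r))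
    (g := fun r => f₂ r - f₂ 0) hexp fun r s hr hs => cocycle_of_exp_twisted heq hr hs
  have hf₂ : ∀ r, 0 ≤ r → f₂ r = c * exp (σ * r) + (f₂ 0 - c) := fun r hr => by
    linear_combination hc r hr
  refine ⟨f₁ 0 + f₂ 0 - c, c, c - f₂ 0, f₂ 0 - c, by ring, fun s hs => ?_, hf₂⟩
  have hinv : exp (-σ * s) * exp (σ * s) = 1 := by rw [← exp_add]; simp
  rw [eq_exp_mul_of_exp_twisted heq hs, hf₂ s hs]
  linear_combination c * hinv
end

section
/- If f₁ : [0,∞) → ℝ satisfies f₁(a+b) = exp(−σb)·f₁(a) + f₁(b) − exp(−σb)·f₁(0) for all a, b ≥ 0, where σ ≠ 0, then there exists c₁ ∈ ℝ such that f₁(a) = c₁·(exp(−σa) − 1) + f₁(0) for all a ≥ 0. -/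
/-!
Put `g a = f₁ a - f₁ 0` and `E a = exp (-σ a)`, so that the equation reads
`g (a + b) = E b * g a + g b`. Comparing it with the same equation for `b + a` gives
`g a * (E b - 1) = g b * (E a - 1)`; fixing `b = 1`, where `E 1 ≠ 1` because `σ ≠ 0`,
shows that `g` is a constant multiple of `E - 1`.
-/

theorem sub_mul_sub_one_eq_of_map_add {α R : Type*} [AddCommMagma α] [CommRing R]
    {s : Set α} {f E : α → R} {k : R}
    (h : ∀ a ∈ s, ∀ b ∈ s, f (a + b) = E b * f a + f b - E b * k)
    {a b : α} (ha : a ∈ s) (hb : b ∈ s) :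
    (f a - k) * (E b - 1) = (f b - k) * (E a - 1) := by
  have hab := h a ha b hb
  rw [add_comm, h b hb a ha] at hab
  linear_combination -hab

theorem exists_eq_mul_sub_one_of_mul_sub_one_eq {α K : Type*} [Field K]
    {s : Set α} {g E : α → K} {b : α} (hEb : E b ≠ 1)
    (h : ∀ a ∈ s, g a * (E b - 1) = g b * (E a - 1)) :
    ∃ c, ∀ a ∈ s, g a = c * (E a - 1) := by
  have hEb' : E b - 1 ≠ 0 := sub_ne_zero.mpr hEb
  refine ⟨g b / (E b - 1), fun a ha => ?_⟩
  rw [div_mul_eq_mul_div, eq_div_iff hEb', h a ha]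

theorem twisted_cauchy (σ : ℝ) (hσ : σ ≠ 0) (f₁ : ℝ → ℝ)
    (heq : ∀ a b : ℝ, 0 ≤ a → 0 ≤ b →
      f₁ (a + b) = Real.exp (-σ * b) * f₁ a + f₁ b - Real.exp (-σ * b) * f₁ 0) :
    ∃ c₁ : ℝ, ∀ a : ℝ, 0 ≤ a → f₁ a = c₁ * (Real.exp (-σ * a) - 1) + f₁ 0 := by
  have hE₁ : Real.exp (-σ * 1) ≠ 1 := by
    rw [Ne, Real.exp_eq_one_iff]
    simpa using hσ
  have hsymm : ∀ a ∈ Set.Ici (0 : ℝ),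
      (f₁ a - f₁ 0) * (Real.exp (-σ * 1) - 1) = (f₁ 1 - f₁ 0) * (Real.exp (-σ * a) - 1) :=
    fun a ha => sub_mul_sub_one_eq_of_map_add (fun a ha b hb => heq a b ha hb) ha
      (Set.mem_Ici.mpr zero_le_one)
  obtain ⟨c, hc⟩ := exists_eq_mul_sub_one_of_mul_sub_one_eq
    (g := fun a => f₁ a - f₁ 0) (E := fun a => Real.exp (-σ * a)) hE₁ hsymm
  exact ⟨c, fun a ha => eq_add_of_sub_eq (hc a ha)⟩
end
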